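/- arXiv:2412.00466 — 2 statements merged into one kernel-verified Lean document; each statement's English description precedes it below -/
import Mathlib

section
/- (CoMa sufficiency bound, Theorem 1.) In the Bernoulli-design group testing model with n items, defective set K of size k (1 ≤ k < n), i.i.d. Bernoulli(p) test-matrix entries with p ∈ (0,1), let G be the number of hidden non-defective items (the number of false positives output by the CoMa algorithm). Fix an integer g with 0 ≤ g ≤ n−k−1 and δ ∈ (0,1). If the number of tests m (a natural number) satisfies m ≥ ( log C(n−k, g+1) + log(1/δ) ) / log( 1/(1 − (1−p)^k + (1−p)^{g+k+1}) ), where log is the natural logarithm and C(·,·) the binomial coefficient, then P(G > g) ≤ δ. -/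
open MeasureTheory
open scoped ENNReal

/-- The Bernoulli(p) measure on `Bool`: `P(true) = p`, `P(false) = 1 - p`. -/
noncomputable def bern (p : ℝ) : Measure Bool :=
  ENNReal.ofReal p • Measure.dirac true + ENNReal.ofReal (1 - p) • Measure.dirac false

instance (p : ℝ) : IsFiniteMeasure (bern p) := by
  constructor
  simp [bern, Measure.add_apply, Measure.smul_apply]

/-- The number of hidden non-defective items: items `j ∉ K` such that every test in which
`j` participates contains some defective item. -/
def hiddenCount {n m : ℕ} (K : Finset (Fin n)) (A : Fin m → Fin n → Bool) : ℕ :=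
  ((Finset.univ \ K).filter
    (fun j => ∀ i, A i j = true → ∃ j' ∈ K, A i j' = true)).card

lemma bern_false {p : ℝ} (hp0 : 0 ≤ p) : bern p {false} = ENNReal.ofReal (1 - p) := by
  simp [bern, Measure.add_apply, Measure.smul_apply, Measure.dirac_apply']

lemma bern_prob {p : ℝ} (hp0 : 0 ≤ p) (hp1 : p ≤ 1) : IsProbabilityMeasure (bern p) := by
  constructor
  rw [bern]
  simp only [Measure.add_apply, Measure.smul_apply, Measure.dirac_apply, smul_eq_mul]
  simp [← ENNReal.ofReal_add hp0 (by linarith : (0:ℝ) ≤ 1 - p)]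
lemma allFalse_measure {n : ℕ} {p : ℝ} (hp0 : 0 ≤ p) (hp1 : p ≤ 1) (W : Finset (Fin n)) :
    (Measure.pi fun _ : Fin n => bern p) {x : Fin n → Bool | ∀ j ∈ W, x j = false}
      = ENNReal.ofReal (1 - p) ^ W.card := by
  haveI := bern_prob hp0 hp1
  have h : {x : Fin n → Bool | ∀ j ∈ W, x j = false}
      = Set.pi Set.univ (fun j => if j ∈ W then {false} else Set.univ) := by
    ext x
    simp only [Set.mem_setOf_eq, Set.mem_pi, Set.mem_univ, forall_true_left]
    constructor
    · intro hx j
      by_cases hj : j ∈ W <;> simp [hj, hx]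
    · intro hx j hj
      have := hx j
      simpa [hj] using this
  rw [h, Measure.pi_pi]
  have : ∀ j : Fin n, bern p (if j ∈ W then ({false} : Set Bool) else Set.univ)
      = if j ∈ W then ENNReal.ofReal (1 - p) else 1 := by
    intro j; by_cases hj : j ∈ W
    · simp [hj, bern_false hp0]
    · simp only [hj, if_false]; exact measure_univ
  simp_rw [this]
  rw [Finset.prod_ite_mem, Finset.univ_inter, Finset.prod_const]
lemma allSetsMeasurable {n : ℕ} (s : Set (Fin n → Bool)) : MeasurableSet s :=
  (Set.toFinite s).measurableSet

lemma sep_measure {n : ℕ} {p : ℝ} (hp : p ∈ Set.Ioo (0:ℝ) 1) (K L : Finset (Fin n))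
    (hd : Disjoint K L) :
    (Measure.pi fun _ : Fin n => bern p)
      {x : Fin n → Bool | ∀ j ∈ L, x j = true → ∃ j' ∈ K, x j' = true}
      = ENNReal.ofReal (1 - (1-p)^K.card + (1-p)^(K.card + L.card)) := by
  obtain ⟨hp0, hp1⟩ := hp
  haveI := bern_prob hp0.le hp1.le
  set ν := Measure.pi (fun _ : Fin n => bern p) with hν
  set r := 1 - p with hr
  have hr0 : 0 ≤ r := by simp [hr]; linarith
  have hr1 : r ≤ 1 := by simp [hr]; linarith
  have hcompl : {x : Fin n → Bool | ∀ j ∈ L, x j = true → ∃ j' ∈ K, x j' = true}ᶜ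
      = {x | ∀ j ∈ K, x j = false} \ {x | ∀ j ∈ K ∪ L, x j = false} := by
    ext x
    simp only [Set.mem_compl_iff, Set.mem_setOf_eq, Set.mem_diff, not_forall]
    constructor
    · rintro ⟨j, hj, hxj, hno⟩
      push_neg at hno
      have hK : ∀ j' ∈ K, x j' = false := by
        intro j' hj'
        simpa using hno j' hj'
      exact ⟨hK, ⟨j, ⟨Finset.mem_union_right _ hj, by simp [hxj]⟩⟩⟩
    · rintro ⟨hK, j, hj, hxj⟩
      rcases Finset.mem_union.mp hj with h | h
      · exact absurd (hK j h) hxj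
      · refine ⟨j, h, ?_, ?_⟩
        · cases hb : x j
          · exact absurd (hb) hxj
          · rfl
        · push_neg
          intro j' hj'
          simp [hK j' hj']
  have hsub : {x : Fin n → Bool | ∀ j ∈ K ∪ L, x j = false}
      ⊆ {x | ∀ j ∈ K, x j = false} :=
    fun x hx j hj => hx j (Finset.mem_union_left _ hj)
  have hdiff : ν ({x : Fin n → Bool | ∀ j ∈ K, x j = false}
        \ {x | ∀ j ∈ K ∪ L, x j = false})
      = ν {x | ∀ j ∈ K, x j = false} - ν {x | ∀ j ∈ K ∪ L, x j = false} :=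
    measure_diff hsub (allSetsMeasurable _).nullMeasurableSet (measure_ne_top _ _)
  have hcard : (K ∪ L).card = K.card + L.card := Finset.card_union_of_disjoint hd
  have hpow : ∀ a : ℕ, ENNReal.ofReal r ^ a = ENNReal.ofReal (r ^ a) := by
    intro a; rw [ENNReal.ofReal_pow hr0]
  have hνc : ν {x : Fin n → Bool | ∀ j ∈ L, x j = true → ∃ j' ∈ K, x j' = true}ᶜ
      = ENNReal.ofReal (r ^ K.card - r ^ (K.card + L.card)) := by
    rw [hcompl, hdiff, allFalse_measure hp0.le hp1.le, allFalse_measure hp0.le hp1.le,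
      hcard, hpow, hpow, ← ENNReal.ofReal_sub _ (pow_nonneg hr0 _)]
  have hmono : r ^ (K.card + L.card) ≤ r ^ K.card :=
    pow_le_pow_of_le_one hr0 hr1 (Nat.le_add_right _ _)
  have htot := measure_compl (μ := ν)
    (allSetsMeasurable {x : Fin n → Bool | ∀ j ∈ L, x j = true → ∃ j' ∈ K, x j' = true}ᶜ)
    (measure_ne_top _ _)
  rw [compl_compl, hνc, measure_univ] at htot
  rw [htot, ← ENNReal.ofReal_one, ← ENNReal.ofReal_sub _ (by linarith)]
  congr 1
  ring

lemma event_measure {n m : ℕ} {p : ℝ} (hp : p ∈ Set.Ioo (0:ℝ) 1) (K L : Finset (Fin n))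
    (hd : Disjoint K L) :
    (Measure.pi fun _ : Fin m => Measure.pi fun _ : Fin n => bern p)
      {A | ∀ j ∈ L, ∀ i, A i j = true → ∃ j' ∈ K, A i j' = true}
      = ENNReal.ofReal (1 - (1-p)^K.card + (1-p)^(K.card + L.card)) ^ m := by
  have h : {A : Fin m → Fin n → Bool | ∀ j ∈ L, ∀ i, A i j = true → ∃ j' ∈ K, A i j' = true}
      = Set.pi Set.univ
        (fun _ : Fin m => {x : Fin n → Bool | ∀ j ∈ L, x j = true → ∃ j' ∈ K, x j' = true}) := by
    ext A
    simp only [Set.mem_setOf_eq, Set.mem_pi, Set.mem_univ, forall_true_left]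
    exact ⟨fun h i j hj => h j hj i, fun h j hj i => h i j hj⟩
  rw [h, Measure.pi_pi]
  simp [sep_measure hp K L hd]

/-- CoMa sufficiency bound (Theorem 1): if
`m ≥ (log C(n-k, g+1) + log(1/δ)) / log(1/(1 - (1-p)^k + (1-p)^(g+k+1)))`,
then the probability that the CoMa algorithm makes more than `g` false positive errors is
at most `δ`. -/
theorem stmt4 (n m k g : ℕ) (p : ℝ) (hp : p ∈ Set.Ioo (0 : ℝ) 1)
    (K : Finset (Fin n)) (hK : K.card = k) (hk1 : 1 ≤ k) (hkn : k < n)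
    (hg : g ≤ n - k - 1) (δ : ℝ) (hδ : δ ∈ Set.Ioo (0 : ℝ) 1)
    (hm : (Real.log (Nat.choose (n - k) (g + 1)) + Real.log (1 / δ)) /
        Real.log (1 / (1 - (1 - p) ^ k + (1 - p) ^ (g + k + 1))) ≤ (m : ℝ)) :
    (Measure.pi fun _ : Fin m => Measure.pi fun _ : Fin n => bern p)
      {A | g < hiddenCount K A} ≤ ENNReal.ofReal δ := by
  obtain ⟨hp0, hp1⟩ := hp
  obtain ⟨hδ0, hδ1⟩ := hδ
  set r := 1 - p with hr
  have hr0 : 0 < r := by simp [hr]; linarith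
  have hr1 : r < 1 := by simp [hr]; linarith
  set q : ℝ := 1 - r ^ k + r ^ (g + k + 1) with hq
  have hqform : q = 1 - r ^ k * (1 - r ^ (g+1)) := by
    rw [hq]; ring
  have ha0 : 0 < r ^ k := pow_pos hr0 k
  have ha1 : r ^ k < 1 := pow_lt_one₀ hr0.le hr1 (by omega)
  have hb0 : 0 < r ^ (g+1) := pow_pos hr0 _
  have hb1 : r ^ (g+1) < 1 := pow_lt_one₀ hr0.le hr1 (by omega)
  have hq0 : 0 < q := by rw [hqform]; nlinarith
  have hq1 : q < 1 := by rw [hqform]; nlinarith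
  set μ := Measure.pi fun _ : Fin m => Measure.pi fun _ : Fin n => bern p with hμ
  set 𝓛 := (Finset.univ \ K).powersetCard (g+1) with h𝓛
  -- union bound inclusion
  have hsubset : {A : Fin m → Fin n → Bool | g < hiddenCount K A}
      ⊆ ⋃ L ∈ 𝓛, {A | ∀ j ∈ L, ∀ i, A i j = true → ∃ j' ∈ K, A i j' = true} := by
    intro A hA
    simp only [Set.mem_setOf_eq, hiddenCount] at hA
    obtain ⟨L, hLsub, hLcard⟩ := Finset.exists_subset_card_eq (by omega :
      g + 1 ≤ ((Finset.univ \ K).filter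
        (fun j => ∀ i, A i j = true → ∃ j' ∈ K, A i j' = true)).card)
    simp only [Set.mem_iUnion]
    refine ⟨L, ?_, ?_⟩
    · rw [h𝓛, Finset.mem_powersetCard]
      exact ⟨hLsub.trans (Finset.filter_subset _ _), hLcard⟩
    · intro j hj i hij
      exact (Finset.mem_filter.mp (hLsub hj)).2 i hij
  have hdk : (Finset.univ \ K).card = n - k := by
    rw [Finset.card_sdiff_of_subset (Finset.subset_univ K), hK, Finset.card_univ, Fintype.card_fin]
  -- bound each event
  have hbound : ∀ L ∈ 𝓛, μ {A : Fin m → Fin n → Bool |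
      ∀ j ∈ L, ∀ i, A i j = true → ∃ j' ∈ K, A i j' = true} = ENNReal.ofReal q ^ m := by
    intro L hL
    rw [h𝓛, Finset.mem_powersetCard] at hL
    have hdisj : Disjoint K L := by
      rw [Finset.disjoint_right]
      intro a haL haK
      exact (Finset.mem_sdiff.mp (hL.1 haL)).2 haK
    rw [hμ, event_measure ⟨hp0, hp1⟩ K L hdisj, hK, hL.2,
      show k + (g+1) = g + k + 1 from by omega, hq, hr]
  calc μ {A | g < hiddenCount K A}
      ≤ μ (⋃ L ∈ 𝓛, {A | ∀ j ∈ L, ∀ i, A i j = true → ∃ j' ∈ K, A i j' = true}) :=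
        measure_mono hsubset
    _ ≤ ∑ L ∈ 𝓛, μ {A | ∀ j ∈ L, ∀ i, A i j = true → ∃ j' ∈ K, A i j' = true} :=
        measure_biUnion_finset_le 𝓛 _
    _ = 𝓛.card * ENNReal.ofReal q ^ m := by
        rw [Finset.sum_congr rfl hbound, Finset.sum_const, nsmul_eq_mul]
    _ ≤ ENNReal.ofReal δ := by
        rw [h𝓛, Finset.card_powersetCard, hdk]
        set N := Nat.choose (n - k) (g + 1) with hN
        have hN1 : 1 ≤ N := Nat.choose_pos (by omega)
        have hNpos : (0:ℝ) < N := by exact_mod_cast hN1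
        -- real inequality
        have hlogq : 0 < Real.log (1 / q) := by
          rw [Real.log_div one_ne_zero (ne_of_gt hq0), Real.log_one]
          have := Real.log_neg hq0 hq1
          linarith
        have hml : Real.log N + Real.log (1 / δ) ≤ m * Real.log (1 / q) := by
          rw [div_le_iff₀ hlogq] at hm
          exact hm
        have hkey : (N : ℝ) * q ^ m ≤ δ := by
          have h1 : Real.log ((N : ℝ) * (1/δ)) ≤ Real.log ((1/q) ^ m) := by
            rw [Real.log_mul (ne_of_gt hNpos) (by positivity), Real.log_pow]
            exact hml
          have h2 : (N : ℝ) * (1/δ) ≤ (1/q) ^ m :=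
            (Real.log_le_log_iff (by positivity) (by positivity)).mp h1
          have ht : 0 < q ^ m := pow_pos hq0 m
          have h2' : (N:ℝ) / δ ≤ 1 / q ^ m := by
            rw [div_eq_mul_one_div, ← one_div_pow]; exact h2
          have h3 := (div_le_div_iff₀ hδ0 ht).mp h2'
          linarith
        calc (N : ℕ) * ENNReal.ofReal q ^ m
            = ENNReal.ofReal ((N:ℝ) * q ^ m) := by
              rw [ENNReal.ofReal_mul hNpos.le, ENNReal.ofReal_pow hq0.le,
                ENNReal.ofReal_natCast]
          _ ≤ ENNReal.ofReal δ := ENNReal.ofReal_le_ofReal hkey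
end

section
/- (Core bound of Theorem 3, fixed probable-defective-set form.) Let P be a set of N = k + g items containing the defective set K with |K| = k ≥ 1 and g ≥ 0, let the m×N participation matrix on the columns of P have entries i.i.d. Bernoulli(p) with p ∈ (0,1), and call a defective j ∈ K unidentified if there is no test i with A_{ij} = 1 and A_{ij'} = 0 for all j' ∈ P \ {j}. Then for every integer d with 0 ≤ d ≤ k−1, the probability that more than d defectives are unidentified is at most C(k, d+1) · (1 − (d+1)·p·(1−p)^{k−1+g})^m, where C(·,·) denotes the binomial coefficient. -/
open MeasureTheory
open scoped ENNReal

/-- The number of unidentified defectives: items of `K` that are never the sole participant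
(among the probable defective set) in any test. -/
def unidCount {N m : ℕ} (K : Finset (Fin N)) (A : Fin m → Fin N → Bool) : ℕ :=
  (K.filter (fun j => ∀ i, ¬(A i j = true ∧ ∀ j', j' ≠ j → A i j' = false))).card

open Classical in
lemma bern_apply (p : ℝ) (s : Set Bool) :
    bern p s = (if true ∈ s then ENNReal.ofReal p else 0)
      + (if false ∈ s then ENNReal.ofReal (1 - p) else 0) := by
  simp [bern, Measure.dirac_apply, Set.indicator]

lemma bern_univ (p : ℝ) (h0 : 0 ≤ p) (h1 : p ≤ 1) : bern p Set.univ = 1 := by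
  simp [bern, Measure.dirac_apply, ← ENNReal.ofReal_add h0 (by linarith : (0:ℝ) ≤ 1 - p)]

variable {n : ℕ}

/-- The indicator row vector of `j`. -/
def ev (j : Fin n) : Fin n → Bool := fun j' => decide (j' = j)

lemma meas_all {α : Type*} [MeasurableSpace α] [MeasurableSingletonClass α] [Finite α]
    (s : Set α) : MeasurableSet s :=
  s.toFinite.measurableSet

noncomputable def rowM (p : ℝ) (n : ℕ) : Measure (Fin n → Bool) :=
  Measure.pi fun _ => bern p

instance (p : ℝ) (n : ℕ) : SigmaFinite (rowM p n) := by
  unfold rowM; infer_instance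

lemma rowM_singleton (p : ℝ) (x : Fin n → Bool) :
    rowM p n {x} = ∏ j, bern p {x j} := by
  have : ({x} : Set (Fin n → Bool)) = Set.pi Set.univ (fun j => {x j}) := by
    ext y; simp [funext_iff, Set.mem_pi, eq_comm]
  rw [this, rowM, Measure.pi_pi]

lemma rowM_ev (p : ℝ) (hp : p ∈ Set.Ioo (0:ℝ) 1) (j : Fin n) :
    rowM p n {ev j} = ENNReal.ofReal (p * (1 - p) ^ (n - 1)) := by
  rw [rowM_singleton, ← Finset.mul_prod_erase Finset.univ _ (Finset.mem_univ j)]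
  have h1 : ev j j = true := by simp [ev]
  have h2 : ∀ j' ∈ Finset.univ.erase j, bern p {ev j j'} = ENNReal.ofReal (1 - p) := by
    intro j' hj'
    have : ev j j' = false := by
      simp only [ev, decide_eq_false_iff_not]
      exact (Finset.mem_erase.1 hj').1
    simp [this, bern_apply]
  rw [Finset.prod_congr rfl h2, Finset.prod_const, Finset.card_erase_of_mem (Finset.mem_univ j)]
  simp only [h1, Finset.card_univ, Fintype.card_fin]
  rw [bern_apply]
  simp only [Set.mem_singleton_iff, if_pos rfl, reduceCtorEq, if_neg, add_zero]
  rw [ENNReal.ofReal_mul hp.1.le, ENNReal.ofReal_pow (by linarith [hp.2] : (0:ℝ) ≤ 1 - p)]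
  simp

lemma sole_eq_ev (j : Fin n) :
    {x : Fin n → Bool | x j = true ∧ ∀ j', j' ≠ j → x j' = false} = {ev j} := by
  ext x
  simp only [Set.mem_setOf_eq, Set.mem_singleton_iff]
  constructor
  · rintro ⟨h1, h2⟩
    funext j'
    by_cases hj : j' = j
    · subst hj; simp [ev, h1]
    · simp [ev, hj, h2 j' hj]
  · rintro rfl
    refine ⟨by simp [ev], fun j' hj => by simp [ev, hj]⟩

lemma rowM_union (p : ℝ) (hp : p ∈ Set.Ioo (0:ℝ) 1) (S : Finset (Fin n)) :
    rowM p n (⋃ j ∈ S, {ev j}) = S.card * ENNReal.ofReal (p * (1 - p) ^ (n - 1)) := by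
  rw [measure_biUnion_finset ?_ (fun _ _ => meas_all _)]
  · rw [Finset.sum_congr rfl (fun j _ => rowM_ev p hp j), Finset.sum_const, nsmul_eq_mul]
  · intro a _ b _ hab
    simp only [Function.onFun, Set.disjoint_singleton]
    intro h
    apply hab
    have := congrFun h a
    simpa [ev] using this.symm

lemma card_mul_le_one (p : ℝ) (hp : p ∈ Set.Ioo (0:ℝ) 1) (S : Finset (Fin n)) :
    (S.card : ℝ) * (p * (1 - p) ^ (n - 1)) ≤ 1 := by
  have hq : 0 ≤ p * (1 - p) ^ (n - 1) :=
    mul_nonneg hp.1.le (pow_nonneg (by linarith [hp.2]) _)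
  have h1 : rowM p n (⋃ j ∈ S, {ev j}) ≤ 1 := by
    haveI : IsProbabilityMeasure (bern p) := ⟨bern_univ p hp.1.le hp.2.le⟩
    haveI : IsProbabilityMeasure (rowM p n) :=
      inferInstanceAs (IsProbabilityMeasure (Measure.pi fun _ : Fin n => bern p))
    exact prob_le_one
  rw [rowM_union p hp S] at h1
  have h2 : (ENNReal.ofReal ((S.card : ℝ) * (p * (1 - p) ^ (n - 1)))) ≤ 1 := by
    rw [ENNReal.ofReal_mul (by positivity)]
    simpa using h1
  exact ENNReal.ofReal_le_one.mp h2

lemma rowM_compl (p : ℝ) (hp : p ∈ Set.Ioo (0:ℝ) 1) (S : Finset (Fin n)) :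
    rowM p n ((⋃ j ∈ S, {ev j})ᶜ)
      = ENNReal.ofReal (1 - (S.card : ℝ) * (p * (1 - p) ^ (n - 1))) := by
  haveI : IsProbabilityMeasure (bern p) := ⟨bern_univ p hp.1.le hp.2.le⟩
  haveI : IsProbabilityMeasure (rowM p n) :=
    inferInstanceAs (IsProbabilityMeasure (Measure.pi fun _ : Fin n => bern p))
  have hq : 0 ≤ (S.card : ℝ) * (p * (1 - p) ^ (n - 1)) := by
    have : (0:ℝ) ≤ p * (1 - p) ^ (n - 1) :=
      mul_nonneg hp.1.le (pow_nonneg (by linarith [hp.2]) _)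
    positivity
  rw [measure_compl (meas_all _) (measure_ne_top _ _), measure_univ, rowM_union p hp S,
    ENNReal.ofReal_sub _ hq, ENNReal.ofReal_one,
    ENNReal.ofReal_mul (Nat.cast_nonneg S.card), ENNReal.ofReal_natCast]

/-- Core bound of Theorem 3, fixed probable-defective-set form: for `0 ≤ d ≤ k-1`,
`P(more than d defectives unidentified) ≤ C(k, d+1) (1 - (d+1) p (1-p)^{k-1+g})^m`. -/
theorem stmt19 (k g m d : ℕ) (hk : 1 ≤ k) (hd : d ≤ k - 1) (p : ℝ)
    (hp : p ∈ Set.Ioo (0 : ℝ) 1)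
    (K : Finset (Fin (k + g))) (hK : K.card = k) :
    (Measure.pi fun _ : Fin m => Measure.pi fun _ : Fin (k + g) => bern p)
      {A | d < unidCount K A}
      ≤ ENNReal.ofReal ((Nat.choose k (d + 1) : ℝ) *
          (1 - ((d : ℝ) + 1) * p * (1 - p) ^ (k - 1 + g)) ^ m) := by
  set μ := (Measure.pi fun _ : Fin m => Measure.pi fun _ : Fin (k + g) => bern p) with hμ
  have hexp : k + g - 1 = k - 1 + g := by omega
  set q : ℝ := 1 - ((d : ℝ) + 1) * p * (1 - p) ^ (k - 1 + g) with hqdef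
  -- the bad set for a given S : all tests avoid a sole participant from S
  set B : Finset (Fin (k + g)) → Set (Fin (k + g) → Bool) := fun S => (⋃ j ∈ S, {ev j})ᶜ with hB
  -- union bound inclusion
  have hsub : {A : Fin m → Fin (k + g) → Bool | d < unidCount K A} ⊆
      ⋃ S ∈ K.powersetCard (d + 1), Set.pi Set.univ (fun _ : Fin m => B S) := by
    intro A hA
    simp only [Set.mem_setOf_eq, unidCount] at hA
    set U := K.filter (fun j => ∀ i, ¬(A i j = true ∧ ∀ j', j' ≠ j → A i j' = false)) with hU
    obtain ⟨S, hSU, hScard⟩ := Finset.exists_subset_card_eq (s := U) (n := d + 1) (by omega)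
    refine Set.mem_iUnion₂.mpr ⟨S,
      Finset.mem_powersetCard.mpr ⟨hSU.trans (Finset.filter_subset _ _), hScard⟩, ?_⟩
    intro i _
    simp only [hB, Set.mem_compl_iff, Set.mem_iUnion]
    rintro ⟨j, hjS, hAi⟩
    simp only [Set.mem_singleton_iff] at hAi
    have hjU := hSU hjS
    rw [hU, Finset.mem_filter] at hjU
    refine hjU.2 i ?_
    have : A i ∈ {x : Fin (k + g) → Bool | x j = true ∧ ∀ j', j' ≠ j → x j' = false} := by
      rw [sole_eq_ev]; exact hAi
    exact this
  calc μ {A | d < unidCount K A}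
      ≤ μ (⋃ S ∈ K.powersetCard (d + 1), Set.pi Set.univ (fun _ : Fin m => B S)) :=
        measure_mono hsub
    _ ≤ ∑ S ∈ K.powersetCard (d + 1), μ (Set.pi Set.univ (fun _ : Fin m => B S)) :=
        measure_biUnion_finset_le _ _
    _ ≤ ∑ S ∈ K.powersetCard (d + 1), ENNReal.ofReal (q ^ m) := by
        refine Finset.sum_le_sum (fun S hS => ?_)
        have hScard : S.card = d + 1 := (Finset.mem_powersetCard.mp hS).2
        have hqnn : 0 ≤ q := by
          have := card_mul_le_one p hp S
          rw [hScard] at this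
          rw [hqdef, ← hexp]
          push_cast at this ⊢
          nlinarith [this]
        have hrow : rowM p (k + g) (B S) = ENNReal.ofReal q := by
          rw [hB, rowM_compl p hp S, hScard, hqdef, ← hexp]
          congr 1
          push_cast
          ring
        have : μ (Set.pi Set.univ (fun _ : Fin m => B S)) = ENNReal.ofReal q ^ m := by
          rw [hμ, show (Measure.pi fun _ : Fin m => Measure.pi fun _ : Fin (k + g) => bern p)
              = Measure.pi fun _ : Fin m => rowM p (k + g) from rfl,
            Measure.pi_pi]
          simp [hrow]
        rw [this, ← ENNReal.ofReal_pow hqnn]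
    _ = (k.choose (d + 1) : ℝ≥0∞) * ENNReal.ofReal (q ^ m) := by
        rw [Finset.sum_const, Finset.card_powersetCard, hK, nsmul_eq_mul]
    _ ≤ ENNReal.ofReal ((k.choose (d + 1) : ℝ) * q ^ m) := by
        rw [ENNReal.ofReal_mul (by positivity)]
        simp
end
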